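/- arXiv:2405.10297 — 2 statements merged into one kernel-verified Lean document; each statement's English description precedes it below -/
import Mathlib

section
/- Every affine source of min-entropy k is a sumset source: if X is uniform over a k-dimensional affine subspace of F_2^n with k = k1 + k2 for positive integers k1, k2, then X = A + B where A and B are independent sources each with min-entropy at least min(k1, k2). -/
open scoped Classical

/-- `p` is a probability distribution on `𝔽₂ⁿ`. -/
def IsSource {n : ℕ} (p : (Fin n → ZMod 2) → ℝ) : Prop :=
  (∀ x, 0 ≤ p x) ∧ ∑ x, p x = 1

/-- `p` has min-entropy at least `k`: every atom has probability at most `2⁻ᵏ`. -/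
def MinEntGe {n : ℕ} (p : (Fin n → ZMod 2) → ℝ) (k : ℕ) : Prop :=
  ∀ x, p x ≤ 1 / 2 ^ k

/-!
Split `V = U₁ ⊕ U₂` with `dim U₁ = k₁` and `dim U₂ = k₂`, and take `A` uniform on the coset
`a + U₁` and `B` uniform on `U₂`. As `U₁ ∩ U₂ = 0`, each point of `a + V` is `(a + u₁) + u₂` for
exactly one pair `(u₁, u₂)` and no other point is such a sum, so `A + B` puts mass
`2⁻ᵏ¹ · 2⁻ᵏ² = 2⁻ᵏ` on each point of `a + V` and none elsewhere.
-/

open Finset Module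

namespace Submodule

variable {K M : Type*} [DivisionRing K] [AddCommGroup M] [Module K M]

theorem exists_isCompl_finrank_eq [FiniteDimensional K M] {k₁ k₂ : ℕ}
    (h : finrank K M = k₁ + k₂) :
    ∃ W₁ W₂ : Submodule K M, IsCompl W₁ W₂ ∧ finrank K W₁ = k₁ ∧ finrank K W₂ = k₂ := by
  obtain ⟨f, hf⟩ := exists_linearIndependent_of_le_finrank (R := K) (M := M) (n := k₁) (by omega)
  obtain ⟨W₂, hW⟩ := (span K (Set.range f)).exists_isCompl
  have hW₁ : finrank K (span K (Set.range f)) = k₁ := by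
    rw [finrank_span_eq_card hf, Fintype.card_fin]
  have hsum := finrank_add_eq_of_isCompl hW
  exact ⟨_, W₂, hW, hW₁, by omega⟩

theorem exists_sup_eq_disjoint_finrank_eq (V : Submodule K M) [FiniteDimensional K V]
    {k₁ k₂ : ℕ} (h : finrank K V = k₁ + k₂) :
    ∃ U₁ U₂ : Submodule K M, U₁ ⊔ U₂ = V ∧ Disjoint U₁ U₂ ∧
      finrank K U₁ = k₁ ∧ finrank K U₂ = k₂ := by
  obtain ⟨W₁, W₂, hW, hW₁, hW₂⟩ := exists_isCompl_finrank_eq h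
  refine ⟨W₁.map V.subtype, W₂.map V.subtype, ?_, disjoint_map V.injective_subtype hW.disjoint,
    by rwa [finrank_map_subtype_eq], by rwa [finrank_map_subtype_eq]⟩
  rw [← map_sup, hW.sup_eq_top, map_subtype_top]

end Submodule

namespace AddSubgroup

variable {G : Type*} [AddCommGroup G]

theorem card_filter_mem_and_sub_mem [Fintype G] {H₁ H₂ : AddSubgroup G} (h : Disjoint H₁ H₂)
    (y : G) : #{c | c ∈ H₁ ∧ y - c ∈ H₂} = if y ∈ H₁ ⊔ H₂ then 1 else 0 := by
  split_ifs with hy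
  · obtain ⟨u₁, hu₁, u₂, hu₂, rfl⟩ := mem_sup.1 hy
    refine Finset.card_eq_one.2 ⟨u₁, eq_singleton_iff_unique_mem.2 ⟨by simp [hu₁, hu₂], ?_⟩⟩
    simp only [mem_filter, mem_univ, true_and, and_imp]
    intro c hc₁ hc₂
    have : c - u₁ ∈ H₂ := by
      convert H₂.sub_mem hu₂ hc₂ using 1; abel
    exact sub_eq_zero.1 (disjoint_def.1 h (H₁.sub_mem hc₁ hu₁) this)
  · refine card_eq_zero.2 (filter_eq_empty_iff.2 fun c _ ⟨hc₁, hc₂⟩ => hy ?_)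
    simpa using add_mem (mem_sup_left hc₁) (mem_sup_right hc₂)

end AddSubgroup

section UniformOnCoset

variable {G : Type*} [AddCommGroup G]

noncomputable def uniformOnCoset (H : AddSubgroup G) (a x : G) : ℝ :=
  if x - a ∈ H then (Nat.card H : ℝ)⁻¹ else 0

variable (H : AddSubgroup G) (a : G)

theorem uniformOnCoset_nonneg (x : G) : 0 ≤ uniformOnCoset H a x := by
  unfold uniformOnCoset; split_ifs <;> positivity

theorem uniformOnCoset_le (x : G) : uniformOnCoset H a x ≤ (Nat.card H : ℝ)⁻¹ := by
  unfold uniformOnCoset; split_ifs; exacts [le_rfl, by positivity]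

theorem sum_uniformOnCoset [Fintype G] : ∑ x, uniformOnCoset H a x = 1 := by
  rw [← Equiv.sum_comp (Equiv.addRight a)]
  simp only [uniformOnCoset, Equiv.coe_addRight, add_sub_cancel_right]
  rw [sum_ite, sum_const_zero, add_zero, sum_const, nsmul_eq_mul, ← Fintype.card_subtype,
    ← Nat.card_eq_fintype_card]
  exact mul_inv_cancel₀ (Nat.cast_ne_zero.2 Nat.card_pos.ne')

theorem sum_uniformOnCoset_mul_uniformOnCoset_sub [Fintype G] {H₁ H₂ : AddSubgroup G}
    (h : Disjoint H₁ H₂) (a x : G) :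
    ∑ b, uniformOnCoset H₁ a b * uniformOnCoset H₂ 0 (x - b) =
      if x - a ∈ H₁ ⊔ H₂ then (Nat.card H₁ : ℝ)⁻¹ * (Nat.card H₂ : ℝ)⁻¹ else 0 := by
  rw [← Equiv.sum_comp (Equiv.addRight a)]
  simp only [uniformOnCoset, Equiv.coe_addRight, add_sub_cancel_right, sub_zero,
    sub_add_eq_sub_sub_swap, ite_zero_mul_ite_zero]
  rw [sum_ite, sum_const_zero, add_zero, sum_const, nsmul_eq_mul,
    AddSubgroup.card_filter_mem_and_sub_mem h]
  split_ifs <;> simp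

end UniformOnCoset

-- `CharP.pi` would give this, but it needs `Nonempty ι`, which fails for `Fin 0`.
theorem CharTwo.pi_add_eq_sub {ι R : Type*} [Ring R] [CharP R 2] (x y : ι → R) :
    x + y = x - y :=
  funext fun i => (CharTwo.sub_eq_add (x i) (y i)).symm

section Sources

variable {n : ℕ} (H : AddSubgroup (Fin n → ZMod 2)) (a : Fin n → ZMod 2)

theorem isSource_uniformOnCoset : IsSource (uniformOnCoset H a) :=
  ⟨uniformOnCoset_nonneg H a, sum_uniformOnCoset H a⟩

theorem minEntGe_uniformOnCoset {d k : ℕ} (hH : Nat.card H = 2 ^ d) (hk : k ≤ d) :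
    MinEntGe (uniformOnCoset H a) k := fun x =>
  calc uniformOnCoset H a x ≤ (Nat.card H : ℝ)⁻¹ := uniformOnCoset_le H a x
    _ = 1 / 2 ^ d := by rw [hH, one_div, Nat.cast_pow, Nat.cast_ofNat]
    _ ≤ 1 / 2 ^ k := one_div_le_one_div_of_le (by positivity) (pow_le_pow_right₀ one_le_two hk)

end Sources

theorem stmt6_general (n k k₁ k₂ : ℕ) (hk : k = k₁ + k₂)
    (V : Submodule (ZMod 2) (Fin n → ZMod 2)) (hV : Module.finrank (ZMod 2) V = k)
    (a : Fin n → ZMod 2) :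
    ∃ pA pB : (Fin n → ZMod 2) → ℝ,
      IsSource pA ∧ IsSource pB ∧
      MinEntGe pA (min k₁ k₂) ∧ MinEntGe pB (min k₁ k₂) ∧
      ∀ x, (if x + a ∈ V then (1 : ℝ) / 2 ^ k else 0) = ∑ b, pA b * pB (x + b) := by
  obtain ⟨U₁, U₂, hsup, hdisj, hU₁, hU₂⟩ := V.exists_sup_eq_disjoint_finrank_eq (hV.trans hk)
  have hcard {U : Submodule (ZMod 2) (Fin n → ZMod 2)} {d : ℕ} (hU : finrank (ZMod 2) U = d) :
      Nat.card U.toAddSubgroup = 2 ^ d := by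
    have := Module.natCard_eq_pow_finrank (K := ZMod 2) (V := U)
    rwa [Nat.card_zmod, hU] at this
  have hdisj' : Disjoint U₁.toAddSubgroup U₂.toAddSubgroup :=
    AddSubgroup.disjoint_def.2 fun hx₁ hx₂ => Submodule.disjoint_def.1 hdisj _ hx₁ hx₂
  refine ⟨uniformOnCoset U₁.toAddSubgroup a, uniformOnCoset U₂.toAddSubgroup 0,
    isSource_uniformOnCoset _ _, isSource_uniformOnCoset _ _,
    minEntGe_uniformOnCoset _ _ (hcard hU₁) (min_le_left _ _),
    minEntGe_uniformOnCoset _ _ (hcard hU₂) (min_le_right _ _), fun x => ?_⟩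
  simp_rw [CharTwo.pi_add_eq_sub]
  rw [sum_uniformOnCoset_mul_uniformOnCoset_sub hdisj', ← Submodule.sup_toAddSubgroup, hsup,
    hcard hU₁, hcard hU₂, Submodule.mem_toAddSubgroup, hk, pow_add, one_div, mul_inv]
  simp only [Nat.cast_pow, Nat.cast_ofNat]

/-- Every affine source of min-entropy `k = k₁ + k₂` (uniform on a coset `a + V` of a
`k`-dimensional subspace `V`) is a sumset source `A + B` of two independent sources of
min-entropy at least `min k₁ k₂` each. -/
theorem stmt6 (n k k₁ k₂ : ℕ) (hk : k = k₁ + k₂) (h₁ : 0 < k₁) (h₂ : 0 < k₂)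
    (V : Submodule (ZMod 2) (Fin n → ZMod 2)) (hV : Module.finrank (ZMod 2) V = k)
    (a : Fin n → ZMod 2) :
    ∃ pA pB : (Fin n → ZMod 2) → ℝ,
      IsSource pA ∧ IsSource pB ∧
      MinEntGe pA (min k₁ k₂) ∧ MinEntGe pB (min k₁ k₂) ∧
      ∀ x, (if x + a ∈ V then (1 : ℝ) / 2 ^ k else 0) = ∑ b, pA b * pB (x + b) :=
  stmt6_general n k k₁ k₂ hk V hV a
end

section
/- The inner product function IP(x,y) = sum_{i=1}^{n} x_i * y_i over F_2 on F_2^n x F_2^n satisfies: for any two independent sources A on F_2^n and B on F_2^n with min-entropies k1 and k2 respectively, |bias_{(A,B)}(IP)| <= 2^{(n - k1 - k2)/2}. In particular IP, a degree-2 polynomial in 2n variables, extracts from two independent sources whenever k1 + k2 > n + 2 log(1/eps). -/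
open Finset Matrix

theorem sq_dotProduct_mulVec_le {α β : Type*} [Fintype α] [Fintype β] [DecidableEq β]
    (H : Matrix α β ℝ) {N : ℝ} (hH : Hᵀ * H = N • 1) (p : α → ℝ) (q : β → ℝ) :
    (p ⬝ᵥ H *ᵥ q) ^ 2 ≤ N * (p ⬝ᵥ p) * (q ⬝ᵥ q) := by
  have hHq : H *ᵥ q ⬝ᵥ H *ᵥ q = N * (q ⬝ᵥ q) := by
    rw [dotProduct_mulVec, ← vecMul_transpose, vecMul_vecMul, hH, vecMul_smul, vecMul_one,
      smul_dotProduct, smul_eq_mul]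
  calc (p ⬝ᵥ H *ᵥ q) ^ 2 ≤ (p ⬝ᵥ p) * (H *ᵥ q ⬝ᵥ H *ᵥ q) := by
        simpa only [dotProduct, sq] using sum_mul_sq_le_sq_mul_sq univ p (H *ᵥ q)
    _ = N * (p ⬝ᵥ p) * (q ⬝ᵥ q) := by rw [hHq]; ring

theorem sum_addChar_dotProduct {ι R M : Type*} [Fintype ι] [DecidableEq ι] [CommRing R]
    [Fintype R] [DecidableEq R] [CommRing M] [IsDomain M] (ψ : AddChar R M)
    (hψ : Function.Injective ψ) (c : ι → R) :
    ∑ a : ι → R, ψ (a ⬝ᵥ c) = if c = 0 then (Fintype.card (ι → R) : M) else 0 := by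
  let χ : AddChar (ι → R) M :=
    ψ.compAddMonoidHom (AddMonoidHom.mk' (· ⬝ᵥ c) fun a b => add_dotProduct a b c)
  have hχ : χ = 0 ↔ c = 0 := by
    rw [← dotProduct_eq_zero_iff, AddChar.eq_zero_iff]
    refine forall_congr' fun a => ?_
    rw [dotProduct_comm, ← ψ.map_zero_eq_one]
    exact hψ.eq_iff
  calc ∑ a, ψ (a ⬝ᵥ c) = ∑ a, χ a := rfl
    _ = _ := by rw [χ.sum_eq_ite]; exact if_congr hχ rfl rfl

noncomputable def signChar : AddChar (ZMod 2) ℝ := AddChar.zmodChar 2 (ζ := (-1 : ℝ)) (by norm_num)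

lemma signChar_apply (x : ZMod 2) : signChar x = if x = 0 then 1 else -1 := by
  rw [signChar, AddChar.zmodChar_apply]
  obtain rfl | rfl : x = 0 ∨ x = 1 := by decide +revert
  · simp
  · simp [ZMod.val_one]

lemma signChar_injective : Function.Injective signChar :=
  AddChar.injective_iff.2 fun x hx => by
    rw [signChar_apply] at hx
    split_ifs at hx with hx0
    · exact hx0
    · norm_num at hx

noncomputable def ipSignMatrix (n : ℕ) : Matrix (Fin n → ZMod 2) (Fin n → ZMod 2) ℝ :=
  of fun a b => signChar (a ⬝ᵥ b)

theorem ipSignMatrix_transpose_mul (n : ℕ) :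
    (ipSignMatrix n)ᵀ * ipSignMatrix n = (2 ^ n : ℝ) • 1 := by
  ext b b'
  have hcancel : b + b' = 0 ↔ b = b' := by
    rw [add_eq_zero_iff_eq_neg, show -b' = b' from funext fun i => ZMod.neg_eq_self_mod_two (b' i)]
  simp only [mul_apply, transpose_apply, ipSignMatrix, of_apply, ← AddChar.map_add_eq_mul,
    ← dotProduct_add, sum_addChar_dotProduct signChar signChar_injective, hcancel,
    Matrix.smul_apply, one_apply, Fintype.card_fun, ZMod.card, Fintype.card_fin]
  simp

theorem IsSource.dotProduct_self_le {n k : ℕ} {p : (Fin n → ZMod 2) → ℝ} (hp : IsSource p)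
    (hk : MinEntGe p k) : p ⬝ᵥ p ≤ 1 / 2 ^ k :=
  calc p ⬝ᵥ p ≤ ∑ x, p x * (1 / 2 ^ k) :=
        sum_le_sum fun x _ => mul_le_mul_of_nonneg_left (hk x) (hp.1 x)
    _ = 1 / 2 ^ k := by rw [← sum_mul, hp.2, one_mul]

/-- Chor–Goldreich: the bias of the inner-product function on two independent sources of
min-entropies `k₁` and `k₂` is at most `2^{(n - k₁ - k₂)/2}`. -/
theorem stmt10 (n k₁ k₂ : ℕ) (pA pB : (Fin n → ZMod 2) → ℝ)
    (hA : IsSource pA) (hB : IsSource pB)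
    (h₁ : MinEntGe pA k₁) (h₂ : MinEntGe pB k₂) :
    |∑ a, ∑ b, pA a * pB b * (if (∑ i, a i * b i) = (0 : ZMod 2) then (1 : ℝ) else -1)|
      ≤ (2 : ℝ) ^ (((n : ℝ) - k₁ - k₂) / 2) := by
  have hbias : ∑ a, ∑ b, pA a * pB b * (if (∑ i, a i * b i) = (0 : ZMod 2) then (1 : ℝ) else -1)
      = pA ⬝ᵥ ipSignMatrix n *ᵥ pB := by
    simp only [dotProduct, mulVec, ipSignMatrix, of_apply, signChar_apply, mul_sum]
    exact sum_congr rfl fun a _ => sum_congr rfl fun b _ => by ring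
  have hpow : ((2 : ℝ) ^ (((n : ℝ) - k₁ - k₂) / 2)) ^ 2 = 2 ^ n * (1 / 2 ^ k₁) * (1 / 2 ^ k₂) := by
    rw [← Real.rpow_natCast, ← Real.rpow_mul zero_le_two, Nat.cast_ofNat,
      div_mul_cancel₀ _ two_ne_zero, Real.rpow_sub two_pos, Real.rpow_sub two_pos]
    simp only [Real.rpow_natCast]
    ring
  rw [hbias]
  refine abs_le_of_sq_le_sq ?_ (by positivity)
  calc (pA ⬝ᵥ ipSignMatrix n *ᵥ pB) ^ 2 ≤ 2 ^ n * (pA ⬝ᵥ pA) * (pB ⬝ᵥ pB) :=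
        sq_dotProduct_mulVec_le _ (ipSignMatrix_transpose_mul n) pA pB
    _ ≤ 2 ^ n * (1 / 2 ^ k₁) * (1 / 2 ^ k₂) := by
        gcongr
        · exact sum_nonneg fun _ _ => mul_self_nonneg _
        · exact hA.dotProduct_self_le h₁
        · exact hB.dotProduct_self_le h₂
    _ = _ := hpow.symm
end
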